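/- arXiv:2303.16240 — 3 statements merged into one kernel-verified Lean document; each statement's English description precedes it below -/
import Mathlib

section
/- If a finite family of compact intervals in ℝ has the (p+1,2) property (i.e., among any p+1 members some two intersect, equivalently its matching number is at most p), then the family can be pierced by at most p points. -/
/-- **Gallai's theorem**: a finite family of compact intervals in ℝ with the
(p+1,2) property is pierced by at most `p` points. -/
theorem gallai_interval_piercing (p : ℕ) (F : Finset (Set ℝ))
    (hint : ∀ S ∈ F, ∃ a b : ℝ, a ≤ b ∧ S = Set.Icc a b)
    (hpq : ∀ G : Finset (Set ℝ), G ⊆ F → G.card = p + 1 →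
      ∃ S ∈ G, ∃ T ∈ G, S ≠ T ∧ (S ∩ T).Nonempty) :
    ∃ C : Finset ℝ, C.card ≤ p ∧ ∀ S ∈ F, ∃ x ∈ C, x ∈ S := by
  induction p generalizing F with
  | zero =>
    refine ⟨∅, le_refl _, fun S hS => absurd (hpq {S} ?_ ?_) ?_⟩
    · simpa using hS
    · simp
    · rintro ⟨A, hA, B, hB, hAB, -⟩
      simp only [Finset.mem_singleton] at hA hB
      exact hAB (hA.trans hB.symm)
  | succ p ih =>
    classical
    rcases F.eq_empty_or_nonempty with rfl | hne
    · exact ⟨∅, by simp, by simp⟩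
    obtain ⟨S₀, hS₀, hmin⟩ := F.exists_min_image sSup hne
    obtain ⟨a₀, b₀, hab₀, hS₀eq⟩ := hint S₀ hS₀
    have hsup₀ : sSup S₀ = b₀ := by rw [hS₀eq, csSup_Icc hab₀]
    set x := sSup S₀ with hx
    have hxS₀ : x ∈ S₀ := by rw [hS₀eq, hsup₀]; exact Set.right_mem_Icc.2 hab₀
    -- intervals missing x are disjoint from S₀
    have hdisj : ∀ T ∈ F, x ∉ T → S₀ ∩ T = ∅ := by
      intro T hT hxT
      obtain ⟨a, b, hab, rfl⟩ := hint T hT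
      have hxb : x ≤ b := by
        have := hmin _ hT
        rwa [csSup_Icc hab] at this
      have hax : x < a := by
        by_contra h
        exact hxT ⟨le_of_not_gt h, hxb⟩
      ext y
      simp only [Set.mem_inter_iff, Set.mem_empty_iff_false, iff_false, not_and]
      intro hyS₀ hyT
      have : y ≤ b₀ := by rw [hS₀eq] at hyS₀; exact hyS₀.2
      have : y ≤ x := by rw [hsup₀]; exact this
      exact absurd (lt_of_lt_of_le hax hyT.1) (not_lt.2 this)
    set F' := F.filter (fun S => x ∉ S) with hF'
    have hF'sub : F' ⊆ F := Finset.filter_subset _ _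
    have hmemF' : ∀ {S}, S ∈ F' ↔ S ∈ F ∧ x ∉ S := by
      intro S; simp [hF']
    have hpq' : ∀ G : Finset (Set ℝ), G ⊆ F' → G.card = p + 1 →
        ∃ S ∈ G, ∃ T ∈ G, S ≠ T ∧ (S ∩ T).Nonempty := by
      intro G hG hGcard
      have hS₀G : S₀ ∉ G := fun h => (hmemF'.1 (hG h)).2 hxS₀
      have hsub : insert S₀ G ⊆ F :=
        Finset.insert_subset hS₀ (hG.trans hF'sub)
      have hcard : (insert S₀ G).card = p + 1 + 1 := by
        rw [Finset.card_insert_of_notMem hS₀G, hGcard]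
      obtain ⟨A, hA, B, hB, hAB, hABne⟩ := hpq _ hsub hcard
      rw [Finset.mem_insert] at hA hB
      rcases hA with rfl | hA
      · rcases hB with rfl | hB
        · exact absurd rfl hAB
        · exact absurd hABne (by
            rw [hdisj B (hG.trans hF'sub hB) (hmemF'.1 (hG hB)).2]
            exact Set.not_nonempty_empty)
      · rcases hB with rfl | hB
        · exact absurd hABne (by
            rw [Set.inter_comm, hdisj A (hG.trans hF'sub hA) (hmemF'.1 (hG hA)).2]
            exact Set.not_nonempty_empty)
        · exact ⟨A, hA, B, hB, hAB, hABne⟩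
    obtain ⟨C', hC'card, hC'⟩ := ih F' (fun S hS => hint S (hF'sub hS)) hpq'
    refine ⟨insert x C', ?_, ?_⟩
    · calc (insert x C').card ≤ C'.card + 1 := Finset.card_insert_le _ _
        _ ≤ p + 1 := by omega
    · intro S hS
      by_cases hxS : x ∈ S
      · exact ⟨x, Finset.mem_insert_self _ _, hxS⟩
      · obtain ⟨y, hy, hyS⟩ := hC' S (hmemF'.2 ⟨hS, hxS⟩)
        exact ⟨y, Finset.mem_insert_of_mem hy, hyS⟩
end

section
/- For every positive integer p there exists a finite family F of compact convex sets in ℝ² with the (p+1,2) property that cannot be pierced by fewer than ⌊p/2⌋ + 1 lines; namely, the family of the 2p+1 edges (sides) of a regular (2p+1)-gon. -/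
open Real Classical

/-- A line in the plane: the set `{a + t • v : t ∈ ℝ}` for some `v ≠ 0`. -/
def IsLine (ℓ : Set (ℝ × ℝ)) : Prop :=
  ∃ a v : ℝ × ℝ, v ≠ 0 ∧ ℓ = {q | ∃ t : ℝ, q = a + t • v}

/-- The `j`-th vertex of the regular `n`-gon inscribed in the unit circle. -/
noncomputable def gonVertex (n j : ℕ) : ℝ × ℝ :=
  (Real.cos (2 * π * j / n), Real.sin (2 * π * j / n))

/-- The `j`-th edge of the regular `n`-gon: the closed segment between
consecutive vertices. -/
noncomputable def gonEdge (n j : ℕ) : Set (ℝ × ℝ) :=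
  segment ℝ (gonVertex n j) (gonVertex n (j + 1))


/-! A line meets at most four edges: parametrise edge `j` by the arc `[2πj/n, 2π(j+1)/n]` of
the circle; by the intermediate value theorem every edge met by the line `αx + βy = c` yields
an angle `t` of its arc with `α cos t + β sin t = c`. This equation has at most two solutions
modulo `2π`, and each solution lies on at most two arcs, so at most `4` edges are met and
`2p + 1` edges need more than `p / 2` lines. Conversely, among `p + 1` of the `2p + 1` edges two
are cyclically consecutive, and consecutive edges are distinct (a vertex lies on no chord
joining two other points of the circle) but share a vertex. -/

open Finset

lemma eq_or_eq_of_mem_segment_of_sq_add_sq_eq_one {A B C : ℝ × ℝ}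
    (hA : A.1 ^ 2 + A.2 ^ 2 = 1) (hB : B.1 ^ 2 + B.2 ^ 2 = 1) (hC : C.1 ^ 2 + C.2 ^ 2 = 1)
    (h : A ∈ segment ℝ B C) : A = B ∨ A = C := by
  obtain ⟨u, w, -, -, huw, rfl⟩ := h
  simp only [Prod.fst_add, Prod.snd_add, Prod.smul_fst, Prod.smul_snd, smul_eq_mul] at hA
  -- `1 - ‖u • B + w • C‖² = u w ‖B - C‖²` on the unit circle when `u + w = 1`
  have key : u * w * ((B.1 - C.1) ^ 2 + (B.2 - C.2) ^ 2) = 0 := by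
    linear_combination (-1) * hA + u * hB + w * hC +
      (1 + u * (B.1 ^ 2 + B.2 ^ 2) + w * (C.1 ^ 2 + C.2 ^ 2)) * huw
  rcases mul_eq_zero.1 key with huw0 | hBC
  · rcases mul_eq_zero.1 huw0 with rfl | rfl
    · right; simp [show w = 1 by linarith]
    · left; simp [show u = 1 by linarith]
  · have hBC : B = C := by
      ext <;> nlinarith [sq_nonneg (B.1 - C.1), sq_nonneg (B.2 - C.2)]
    left; subst hBC; rw [← add_smul, huw, one_smul]

lemma exists_mem_and_succ_mod_mem {n : ℕ} {J : Finset ℕ} (hJ : J ⊆ range n)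
    (hcard : n < 2 * J.card) : ∃ j ∈ J, (j + 1) % n ∈ J := by
  have hn : 0 < n := Nat.pos_of_ne_zero fun h => by simp_all
  have hshift : (J.image fun j => (j + 1) % n) ⊆ range n := by
    simp only [image_subset_iff, mem_range]
    exact fun _ _ => Nat.mod_lt _ hn
  have hinj : Set.InjOn (fun j => (j + 1) % n) J := fun a ha b hb h =>
    (Nat.ModEq.add_right_cancel' 1 h).eq_of_lt_of_lt (mem_range.1 (hJ ha)) (mem_range.1 (hJ hb))
  obtain ⟨m, hm⟩ := inter_nonempty_of_card_lt_card_add_card hJ hshift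
    (by rw [card_image_of_injOn hinj, card_range]; omega)
  obtain ⟨hmJ, hm'⟩ := mem_inter.1 hm
  obtain ⟨j, hj, rfl⟩ := mem_image.1 hm'
  exact ⟨j, hj, hmJ⟩

lemma Real.Angle.card_le_two_of_mul_cos_add_mul_sin_eq {α β c : ℝ} (hαβ : (α, β) ≠ 0)
    {S : Finset Real.Angle} (hS : ∀ θ ∈ S, α * Real.Angle.cos θ + β * Real.Angle.sin θ = c) :
    S.card ≤ 2 := by
  -- `α cos θ + β sin θ = ‖z‖ cos (θ + arg z)`, and `cos` takes each value only at `±ψ`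
  set z : ℂ := ⟨α, -β⟩
  have hz : z ≠ 0 := fun h => hαβ (by simpa [z, Complex.ext_iff] using h)
  set φ : Real.Angle := (z.arg : Real.Angle)
  have hR : 0 < ‖z‖ := norm_pos_iff.2 hz
  have hcos : ∀ θ ∈ S, Real.Angle.cos (θ + φ) = c / ‖z‖ := by
    intro θ hθ
    rw [eq_div_iff hR.ne', Real.Angle.cos_add, ← hS θ hθ]
    simp only [φ, Real.Angle.cos_coe, Real.Angle.sin_coe, Complex.cos_arg hz, Complex.sin_arg]
    field_simp
    simp [z]
  by_contra! h
  obtain ⟨θ₁, h₁, θ₂, h₂, θ₃, h₃, h₁₂, h₁₃, h₂₃⟩ := two_lt_card.1 h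
  rcases Real.Angle.cos_eq_iff_eq_or_eq_neg.1 ((hcos θ₁ h₁).trans (hcos θ₂ h₂).symm) with e₁₂ | e₁₂
  · exact h₁₂ (add_right_cancel e₁₂)
  rcases Real.Angle.cos_eq_iff_eq_or_eq_neg.1 ((hcos θ₁ h₁).trans (hcos θ₃ h₃).symm) with e₁₃ | e₁₃
  · exact h₁₃ (add_right_cancel e₁₃)
  exact h₂₃ (add_right_cancel (neg_injective (e₁₂.symm.trans e₁₃)))

lemma exists_mem_Icc_mul_cos_add_mul_sin_eq {s t α β c : ℝ} (hst : s ≤ t)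
    (h : (segment ℝ (cos s, sin s) (cos t, sin t) ∩ {q | α * q.1 + β * q.2 = c}).Nonempty) :
    ∃ τ ∈ Set.Icc s t, α * cos τ + β * sin τ = c := by
  obtain ⟨q, ⟨u, w, hu, hw, huw, rfl⟩, hq⟩ := h
  have hc : c ∈ Set.uIcc (α * cos s + β * sin s) (α * cos t + β * sin t) := by
    rw [← segment_eq_uIcc]
    refine ⟨u, w, hu, hw, huw, ?_⟩
    simp only [Set.mem_ofPred_eq, Prod.fst_add, Prod.snd_add, Prod.smul_fst, Prod.smul_snd,
      smul_eq_mul] at hq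
    rw [← hq, smul_eq_mul, smul_eq_mul]
    ring
  obtain ⟨τ, hτ, hτc⟩ := intermediate_value_uIcc (by fun_prop : Continuous fun τ =>
    α * cos τ + β * sin τ).continuousOn hc
  exact ⟨τ, Set.uIcc_of_le hst ▸ hτ, hτc⟩

lemma IsLine.exists_subset_level {ℓ : Set (ℝ × ℝ)} (hℓ : IsLine ℓ) :
    ∃ α β c : ℝ, (α, β) ≠ 0 ∧ ℓ ⊆ {q | α * q.1 + β * q.2 = c} := by
  obtain ⟨a, v, hv, rfl⟩ := hℓ
  refine ⟨v.2, -v.1, v.2 * a.1 - v.1 * a.2, fun h => hv ?_, ?_⟩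
  · simp only [Prod.mk_eq_zero, neg_eq_zero] at h
    exact Prod.ext h.2 h.1
  · rintro _ ⟨t, rfl⟩
    simp only [Set.mem_ofPred_eq, Prod.fst_add, Prod.snd_add, Prod.smul_fst, Prod.smul_snd,
      smul_eq_mul]
    ring

noncomputable def gonAngle (n j : ℕ) : ℝ := 2 * π * j / n

lemma gonVertex_eq_cos_sin (n j : ℕ) :
    gonVertex n j = (cos (gonAngle n j), sin (gonAngle n j)) := rfl

lemma gonAngle_strictMono {n : ℕ} (hn : 0 < n) : StrictMono (gonAngle n) := fun a b hab => by
  unfold gonAngle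
  gcongr

@[simp] lemma gonAngle_zero (n : ℕ) : gonAngle n 0 = 0 := by simp [gonAngle]

lemma gonAngle_self {n : ℕ} (hn : 0 < n) : gonAngle n n = 2 * π := by
  unfold gonAngle
  field_simp

lemma gonVertex_eq_gonVertex_iff {n : ℕ} (hn : 0 < n) {a b : ℕ} :
    gonVertex n a = gonVertex n b ↔ a ≡ b [MOD n] := by
  have hangle : gonVertex n a = gonVertex n b ↔ (gonAngle n b : Real.Angle) = gonAngle n a := by
    rw [gonVertex_eq_cos_sin, gonVertex_eq_cos_sin, Prod.mk.injEq]
    refine ⟨fun h => (Real.Angle.cos_sin_inj h.1 h.2).symm, fun h => ?_⟩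
    simpa using ⟨congrArg Real.Angle.cos h.symm, congrArg Real.Angle.sin h.symm⟩
  have hn' : (n : ℝ) ≠ 0 := by positivity
  rw [hangle, Real.Angle.angle_eq_iff_two_pi_dvd_sub, Nat.modEq_iff_dvd]
  refine exists_congr fun k => ?_
  rw [gonAngle, gonAngle, ← sub_div, div_eq_iff hn', ← mul_sub,
    show 2 * π * k * n = 2 * π * (n * k) by ring, mul_right_inj' two_pi_pos.ne', ← @Int.cast_inj ℝ]
  push_cast
  rfl

lemma gonEdge_mod {n : ℕ} (hn : 0 < n) (j : ℕ) : gonEdge n (j % n) = gonEdge n j := by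
  rw [gonEdge, gonEdge, (gonVertex_eq_gonVertex_iff hn).2 (Nat.mod_modEq j n),
    (gonVertex_eq_gonVertex_iff hn).2 ((Nat.mod_modEq j n).add_right 1)]

lemma gonVertex_sq_add_sq (n j : ℕ) : (gonVertex n j).1 ^ 2 + (gonVertex n j).2 ^ 2 = 1 := by
  rw [gonVertex_eq_cos_sin, add_comm]
  exact sin_sq_add_cos_sq _

lemma gonVertex_ne_gonVertex_add {n k : ℕ} (hk : 0 < k) (hkn : k < n) (j : ℕ) :
    gonVertex n j ≠ gonVertex n (j + k) := fun h => by
  have hdvd := (Nat.modEq_iff_dvd' (by omega)).1 ((gonVertex_eq_gonVertex_iff (by omega)).1 h)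
  rw [Nat.add_sub_cancel_left] at hdvd
  exact absurd (Nat.le_of_dvd hk hdvd) (by omega)

lemma gonEdge_ne_gonEdge_succ {n : ℕ} (hn : 3 ≤ n) (j : ℕ) :
    gonEdge n j ≠ gonEdge n (j + 1) := by
  intro h
  have hmem : gonVertex n j ∈ gonEdge n (j + 1) := h ▸ left_mem_segment ℝ _ _
  rcases eq_or_eq_of_mem_segment_of_sq_add_sq_eq_one (gonVertex_sq_add_sq n j)
    (gonVertex_sq_add_sq n _) (gonVertex_sq_add_sq n _) hmem with h1 | h2
  · exact gonVertex_ne_gonVertex_add one_pos (by omega) j h1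
  · exact gonVertex_ne_gonVertex_add two_pos (by omega) j h2

lemma eq_of_coe_angle_eq_of_mem_Icc_gonAngle {n j k : ℕ} (hn : 0 < n) (hj : j < n) (hk : k < n)
    {t u : ℝ} (ht : t ∈ Set.Icc (gonAngle n j) (gonAngle n (j + 1)))
    (hu : u ∈ Set.Icc (gonAngle n k) (gonAngle n (k + 1))) (htu : (t : Real.Angle) = u)
    (hend : t = gonAngle n (j + 1) ↔ u = gonAngle n (k + 1)) : j = k := by
  have hmono := gonAngle_strictMono hn
  have hle : ∀ i ≤ n, gonAngle n i ≤ 2 * π := fun i hi => gonAngle_self hn ▸ hmono.monotone hi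
  have hnonneg : ∀ i, 0 ≤ gonAngle n i := fun i => gonAngle_zero n ▸ hmono.monotone i.zero_le
  have : Fact (0 < 2 * π) := ⟨two_pi_pos⟩
  by_cases hte : t = gonAngle n (j + 1)
  · have hue := hend.1 hte
    subst hte hue
    have hpos : ∀ i, 0 < gonAngle n (i + 1) := fun i => gonAngle_zero n ▸ hmono i.succ_pos
    have heq := (AddCircle.coe_eq_coe_iff_of_mem_Ioc (a := 0)
      ⟨hpos j, by simpa using hle _ hj⟩ ⟨hpos k, by simpa using hle _ hk⟩).1 htu
    exact Nat.succ_injective (hmono.injective heq)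
  · have hue : u < gonAngle n (k + 1) := lt_of_le_of_ne hu.2 (mt hend.2 hte)
    have hte : t < gonAngle n (j + 1) := lt_of_le_of_ne ht.2 hte
    have heq := (AddCircle.coe_eq_coe_iff_of_mem_Ico (a := 0)
      ⟨(hnonneg j).trans ht.1, by simpa using hte.trans_le (hle _ hj)⟩
      ⟨(hnonneg k).trans hu.1, by simpa using hue.trans_le (hle _ hk)⟩).1 htu
    subst heq
    have hjk := hmono.lt_iff_lt.1 (ht.1.trans_lt hue)
    have hkj := hmono.lt_iff_lt.1 (hu.1.trans_lt hte)
    omega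

lemma card_filter_gonEdge_inter_le_four {n : ℕ} (hn : 0 < n) {α β c : ℝ} (hαβ : (α, β) ≠ 0)
    {ℓ : Set (ℝ × ℝ)} (hℓ : ℓ ⊆ {q | α * q.1 + β * q.2 = c}) :
    #{j ∈ range n | (gonEdge n j ∩ ℓ).Nonempty} ≤ 4 := by
  set P := {j ∈ range n | (gonEdge n j ∩ ℓ).Nonempty}
  have hsol : ∀ j ∈ P, ∃ t ∈ Set.Icc (gonAngle n j) (gonAngle n (j + 1)),
      α * cos t + β * sin t = c := by
    intro j hj
    obtain ⟨q, hqe, hqℓ⟩ := (mem_filter.1 hj).2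
    exact exists_mem_Icc_mul_cos_add_mul_sin_eq ((gonAngle_strictMono hn).monotone j.le_succ)
      ⟨q, hqe, hℓ hqℓ⟩
  choose! t ht htc using hsol
  set angles := P.image fun j => (t j : Real.Angle)
  have hangles : angles.card ≤ 2 := by
    refine Real.Angle.card_le_two_of_mul_cos_add_mul_sin_eq (c := c) hαβ fun θ hθ => ?_
    obtain ⟨j, hj, rfl⟩ := mem_image.1 hθ
    simpa using htc j hj
  -- Two arcs share a point only at a common endpoint, the right end of exactly one of them.
  let key j : Real.Angle × Bool := (t j, decide (t j = gonAngle n (j + 1)))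
  have hkey : Set.InjOn key P := fun j hj k hk h => by
    simp only [key, Prod.mk.injEq, decide_eq_decide] at h
    exact eq_of_coe_angle_eq_of_mem_Icc_gonAngle hn (mem_range.1 (mem_filter.1 hj).1)
      (mem_range.1 (mem_filter.1 hk).1) (ht j hj) (ht k hk) h.1 h.2
  calc P.card = (P.image key).card := (card_image_of_injOn hkey).symm
    _ ≤ (angles ×ˢ (univ : Finset Bool)).card :=
      card_le_card fun x hx => by
        obtain ⟨j, hj, rfl⟩ := mem_image.1 hx
        exact mem_product.2 ⟨mem_image_of_mem _ hj, mem_univ _⟩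
    _ ≤ 4 := by
      rw [card_product, card_univ, Fintype.card_bool]
      omega

lemma le_four_mul_card_of_forall_gonEdge_inter_nonempty {n : ℕ} (hn : 0 < n)
    {L : Finset (Set (ℝ × ℝ))} (hL : ∀ ℓ ∈ L, IsLine ℓ)
    (hcover : ∀ j < n, ∃ ℓ ∈ L, (gonEdge n j ∩ ℓ).Nonempty) : n ≤ 4 * L.card := by
  calc n = (range n).card := (card_range n).symm
    _ ≤ (L.biUnion fun ℓ => {j ∈ range n | (gonEdge n j ∩ ℓ).Nonempty}).card :=
      card_le_card fun j hj => by
        obtain ⟨ℓ, hℓ, hjℓ⟩ := hcover j (mem_range.1 hj)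
        exact mem_biUnion.2 ⟨ℓ, hℓ, mem_filter.2 ⟨hj, hjℓ⟩⟩
    _ ≤ ∑ ℓ ∈ L, #{j ∈ range n | (gonEdge n j ∩ ℓ).Nonempty} := card_biUnion_le
    _ ≤ ∑ _ℓ ∈ L, 4 := sum_le_sum fun ℓ hℓ => by
      obtain ⟨α, β, c, hαβ, hℓ⟩ := (hL ℓ hℓ).exists_subset_level
      exact card_filter_gonEdge_inter_le_four hn hαβ hℓ
    _ = 4 * L.card := by rw [sum_const, smul_eq_mul, mul_comm]

/-- **Tightness of Theorem 2**: for every `p ≥ 1`, the family of the `2p+1`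
edges of a regular `(2p+1)`-gon has the `(p+1,2)` property, yet it cannot be
pierced by fewer than `⌊p/2⌋ + 1` lines. -/
theorem gon_edges_tight_example (p : ℕ) (hp : 1 ≤ p)
    (F : Finset (Set (ℝ × ℝ)))
    (hF : F = (Finset.range (2 * p + 1)).image (fun j => gonEdge (2 * p + 1) j)) :
    (∀ G : Finset (Set (ℝ × ℝ)), G ⊆ F → G.card = p + 1 →
      ∃ S ∈ G, ∃ T ∈ G, S ≠ T ∧ (S ∩ T).Nonempty) ∧
    ¬ ∃ L : Finset (Set (ℝ × ℝ)), L.card < p / 2 + 1 ∧ (∀ ℓ ∈ L, IsLine ℓ) ∧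
      ∀ S ∈ F, ∃ ℓ ∈ L, (S ∩ ℓ).Nonempty := by
  set n := 2 * p + 1
  subst hF
  refine ⟨fun G hG hGcard => ?_, fun ⟨L, hLcard, hL, hcover⟩ => ?_⟩
  · set J := {j ∈ range n | gonEdge n j ∈ G}
    have hJ : G ⊆ J.image (gonEdge n) := fun S hS => by
      obtain ⟨j, hj, rfl⟩ := mem_image.1 (hG hS)
      exact mem_image_of_mem _ (mem_filter.2 ⟨hj, hS⟩)
    have hJcard : n < 2 * J.card := by
      have := (card_le_card hJ).trans card_image_le
      omega
    obtain ⟨j, hj, hj'⟩ := exists_mem_and_succ_mod_mem (filter_subset _ _) hJcard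
    rw [mem_filter, gonEdge_mod (by omega)] at hj'
    exact ⟨_, (mem_filter.1 hj).2, _, hj'.2, gonEdge_ne_gonEdge_succ (by omega) j,
      gonVertex n (j + 1), right_mem_segment ℝ _ _, left_mem_segment ℝ _ _⟩
  · have := le_four_mul_card_of_forall_gonEdge_inter_nonempty (by omega) hL
      fun j hj => hcover _ (mem_image_of_mem _ (mem_range.2 hj))
    omega
end

section
/- Let F be a finite family of compact convex sets in ℝ² and F' its family of pairwise intersections, and let p, r ≥ 2. If F has the (p+1,2) property and F' has the (r+1,2) property, then F has the (2r+p+1, 4) property, i.e., among any 2r+p+1 members of F there exist four sets A,B,C,D with (A∩B)∩(C∩D) ≠ ∅. -/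
lemma extract_pairs (p : ℕ) (F : Finset (Set (ℝ × ℝ)))
    (hpq : ∀ G : Finset (Set (ℝ × ℝ)), G ⊆ F → G.card = p + 1 →
      ∃ S ∈ G, ∃ T ∈ G, S ≠ T ∧ (S ∩ T).Nonempty) :
    ∀ (k : ℕ) (T : Finset (Set (ℝ × ℝ))), T ⊆ F → 2 * k + p ≤ T.card + 1 →
    ∃ l : List ((Set (ℝ × ℝ)) × (Set (ℝ × ℝ))),
      l.length = k ∧
      (∀ pr ∈ l, pr.1 ∈ T ∧ pr.2 ∈ T ∧ pr.1 ≠ pr.2 ∧ (pr.1 ∩ pr.2).Nonempty) ∧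
      l.Pairwise (fun a b => a.1 ≠ b.1 ∧ a.1 ≠ b.2 ∧ a.2 ≠ b.1 ∧ a.2 ≠ b.2) := by
  classical
  intro k
  induction k with
  | zero => intro T _ _; exact ⟨[], rfl, by simp, List.Pairwise.nil⟩
  | succ k ih =>
    intro T hTF hcard
    obtain ⟨G, hGT, hGcard⟩ := T.exists_subset_card_eq (n := p + 1) (by omega)
    obtain ⟨S, hSG, S', hS'G, hne, hint⟩ := hpq G (hGT.trans hTF) hGcard
    have hST : S ∈ T := hGT hSG
    have hS'T : S' ∈ T := hGT hS'G
    have hpairsub : ({S, S'} : Finset (Set (ℝ × ℝ))) ⊆ T := by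
      intro x hx; simp at hx; rcases hx with rfl | rfl <;> assumption
    have hcard2 : ({S, S'} : Finset (Set (ℝ × ℝ))).card = 2 := by
      rw [Finset.card_insert_of_notMem (by simpa using hne), Finset.card_singleton]
    have hsd : (T \ {S, S'}).card = T.card - 2 := by
      rw [Finset.card_sdiff_of_subset hpairsub, hcard2]
    obtain ⟨l, hlen, hmem, hpw⟩ := ih (T \ {S, S'})
      ((Finset.sdiff_subset).trans hTF) (by omega)
    refine ⟨(S, S') :: l, by simp [hlen], ?_, ?_⟩
    · intro pr hpr
      rcases List.mem_cons.mp hpr with rfl | hpr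
      · exact ⟨hST, hS'T, hne, hint⟩
      · obtain ⟨h1, h2, h3, h4⟩ := hmem pr hpr
        exact ⟨(Finset.sdiff_subset h1), (Finset.sdiff_subset h2), h3, h4⟩
    · refine List.Pairwise.cons ?_ hpw
      intro b hb
      obtain ⟨h1, h2, -, -⟩ := hmem b hb
      have hb1 : b.1 ∉ ({S, S'} : Finset (Set (ℝ × ℝ))) := (Finset.mem_sdiff.mp h1).2
      have hb2 : b.2 ∉ ({S, S'} : Finset (Set (ℝ × ℝ))) := (Finset.mem_sdiff.mp h2).2
      simp only [Finset.mem_insert, Finset.mem_singleton, not_or] at hb1 hb2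
      exact ⟨fun h => hb1.1 h.symm, fun h => hb2.1 h.symm,
        fun h => hb1.2 h.symm, fun h => hb2.2 h.symm⟩

/-- If `F` has the `(p+1,2)` property and its family of pairwise intersections
has the `(r+1,2)` property (`p, r ≥ 2`), then among any `2r+p+1` members of `F`
there are four distinct sets `A, B, C, D` with `(A ∩ B) ∩ (C ∩ D) ≠ ∅` (in
particular `A ∩ B ≠ ∅`, `C ∩ D ≠ ∅`, and the four sets have a common point). -/
theorem pq_implies_2rp1_4 (p r : ℕ) (hp : 2 ≤ p) (hr : 2 ≤ r)
    (F : Finset (Set (ℝ × ℝ)))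
    (hcpt : ∀ S ∈ F, IsCompact S) (hconv : ∀ S ∈ F, Convex ℝ S)
    (hpq : ∀ G : Finset (Set (ℝ × ℝ)), G ⊆ F → G.card = p + 1 →
      ∃ S ∈ G, ∃ T ∈ G, S ≠ T ∧ (S ∩ T).Nonempty)
    (hrq : ∀ G : Finset (Set (ℝ × ℝ)),
      (↑G : Set (Set (ℝ × ℝ))) ⊆
        {T | ∃ S ∈ F, ∃ S' ∈ F, S ≠ S' ∧ (S ∩ S').Nonempty ∧ T = S ∩ S'} →
      G.card = r + 1 → ∃ S ∈ G, ∃ T ∈ G, S ≠ T ∧ (S ∩ T).Nonempty) :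
    ∀ T : Finset (Set (ℝ × ℝ)), T ⊆ F → T.card = 2 * r + p + 1 →
      ∃ A ∈ T, ∃ B ∈ T, ∃ C ∈ T, ∃ D ∈ T,
        A ≠ B ∧ A ≠ C ∧ A ≠ D ∧ B ≠ C ∧ B ≠ D ∧ C ≠ D ∧
        (A ∩ B).Nonempty ∧ (C ∩ D).Nonempty ∧
        ((A ∩ B) ∩ (C ∩ D)).Nonempty := by
  classical
  intro T hTF hTcard
  obtain ⟨l, hlen, hmem, hpw⟩ := extract_pairs p F hpq (r + 1) T hTF (by omega)
  -- key claim: two distinct pairs in l whose intersections intersect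
  have key : ∃ a ∈ l, ∃ b ∈ l, a ≠ b ∧ ((a.1 ∩ a.2) ∩ (b.1 ∩ b.2)).Nonempty := by
    by_cases h : ∃ a ∈ l, ∃ b ∈ l, a ≠ b ∧ a.1 ∩ a.2 = b.1 ∩ b.2
    · obtain ⟨a, ha, b, hb, hab, heq⟩ := h
      refine ⟨a, ha, b, hb, hab, ?_⟩
      rw [heq, Set.inter_self]
      exact (hmem b hb).2.2.2
    · push_neg at h
      have hnd : l.Nodup := hpw.imp (fun hab => by
        intro hEq; exact hab.1 (congrArg Prod.fst hEq))
      have hndm : (l.map (fun pr => pr.1 ∩ pr.2)).Nodup :=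
        hnd.map_on (fun x hx y hy hxy => by
          by_contra hne
          exact (h x hx y hy hne) hxy)
      set G : Finset (Set (ℝ × ℝ)) := (l.map (fun pr => pr.1 ∩ pr.2)).toFinset with hG
      have hGcard : G.card = r + 1 := by
        rw [hG, List.toFinset_card_of_nodup hndm, List.length_map, hlen]
      have hGsub : (↑G : Set (Set (ℝ × ℝ))) ⊆
          {T | ∃ S ∈ F, ∃ S' ∈ F, S ≠ S' ∧ (S ∩ S').Nonempty ∧ T = S ∩ S'} := by
        intro x hx
        simp only [hG, Finset.coe_sort_coe, List.coe_toFinset, Set.mem_setOf_eq,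
          List.mem_map] at hx
        obtain ⟨pr, hpr, rfl⟩ := hx
        obtain ⟨h1, h2, h3, h4⟩ := hmem pr hpr
        exact ⟨pr.1, hTF h1, pr.2, hTF h2, h3, h4, rfl⟩
      obtain ⟨U, hU, V, hV, hUV, hUVint⟩ := hrq G hGsub hGcard
      rw [hG, List.mem_toFinset, List.mem_map] at hU hV
      obtain ⟨a, ha, rfl⟩ := hU
      obtain ⟨b, hb, rfl⟩ := hV
      exact ⟨a, ha, b, hb, fun hEq => hUV (by rw [hEq]), hUVint⟩
  obtain ⟨a, ha, b, hb, hab, hint⟩ := key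
  obtain ⟨ha1, ha2, ha12, haint⟩ := hmem a ha
  obtain ⟨hb1, hb2, hb12, hbint⟩ := hmem b hb
  have hsymm : Symmetric (fun a b : (Set (ℝ × ℝ)) × (Set (ℝ × ℝ)) =>
      a.1 ≠ b.1 ∧ a.1 ≠ b.2 ∧ a.2 ≠ b.1 ∧ a.2 ≠ b.2) :=
    fun x y h => ⟨h.1.symm, h.2.2.1.symm, h.2.1.symm, h.2.2.2.symm⟩
  haveI : Std.Symm (fun a b : (Set (ℝ × ℝ)) × (Set (ℝ × ℝ)) =>
      a.1 ≠ b.1 ∧ a.1 ≠ b.2 ∧ a.2 ≠ b.1 ∧ a.2 ≠ b.2) := ⟨fun x y h => hsymm h⟩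
  have hR := hpw.forall ha hb hab
  exact ⟨a.1, ha1, a.2, ha2, b.1, hb1, b.2, hb2,
    ha12, hR.1, hR.2.1, hR.2.2.1, hR.2.2.2, hb12, haint, hbint, hint⟩
end
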